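/- arXiv:1810.04660 — 7 statements merged into one kernel-verified Lean document; each statement's English description precedes it below -/
import Mathlib

section
/- Let q be a prime, G a cyclic group of order q with generator g, f : G → ZMod q a conversion function satisfying f(Y) = f(Y⁻¹) for all Y ∈ G, h ∈ ZMod q, and P ∈ G a public key. If (c, s) is a valid ECDSA signature on h under P, then (c, −s) is also a valid ECDSA signature on h under P (ECDSA signatures are malleable). -/
/-- `(c, s)` is a valid ECDSA signature on hash value `h` under public key `P`,
in the group generated by `g` with conversion function `f`. -/
def ECDSAValid {q : ℕ} {G : Type} [Group G] (g : G) (f : G → ZMod q)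
    (P : G) (h : ZMod q) (c s : ZMod q) : Prop :=
  c ≠ 0 ∧ s ≠ 0 ∧ (g ^ h.val * P ^ c.val) ^ (s⁻¹).val ≠ 1 ∧
    f ((g ^ h.val * P ^ c.val) ^ (s⁻¹).val) = c

/-- ECDSA signatures are malleable: if `(c, s)` is a valid signature on `h`
under `P` then so is `(c, -s)`, provided `f Y = f Y⁻¹` for all `Y`. -/
theorem stmt1 (q : ℕ) [Fact q.Prime] (G : Type) [Group G] [Fintype G]
    (hcard : Fintype.card G = q) (g : G) (hgen : ∀ u : G, u ∈ Subgroup.zpowers g)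
    (f : G → ZMod q) (hf : ∀ Y : G, f Y = f Y⁻¹)
    (h : ZMod q) (P : G) (c s : ZMod q)
    (hvalid : ECDSAValid g f P h c s) :
    ECDSAValid g f P h c (-s) := by
  obtain ⟨hc, hs, hR, hfR⟩ := hvalid
  set X := g ^ h.val * P ^ c.val with hX
  have hsinv : s⁻¹ ≠ 0 := inv_ne_zero hs
  have hneg : (-s)⁻¹ = -(s⁻¹) := by field_simp
  have hXq : X ^ q = 1 := by rw [← hcard]; exact pow_card_eq_one
  have hval : ((-s)⁻¹).val = q - (s⁻¹).val := by
    rw [hneg, ZMod.neg_val, if_neg hsinv]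
  have hle : (s⁻¹).val ≤ q := le_of_lt (ZMod.val_lt _)
  have hkey : X ^ ((-s)⁻¹).val = (X ^ (s⁻¹).val)⁻¹ := by
    rw [hval, eq_inv_iff_mul_eq_one, ← pow_add, Nat.sub_add_cancel hle, hXq]
  refine ⟨hc, neg_ne_zero.mpr hs, ?_, ?_⟩
  · rw [hkey]
    simpa using hR
  · rw [hkey, ← hf, hfR]
end

section
/- Let q be a prime, G a cyclic group of order q with generator g, f : G → ZMod q, x, h ∈ ZMod q, and X = g^x. If (c, s) is a valid ECDSA signature on h under X, then setting r' := (h + c·x)·s⁻¹ we have: r' ≠ 0, the recovered point R := (g^h · X^c)^(s⁻¹) equals g^{r'}, c = f(g^{r'}), and s = (h + c·x)·(r')⁻¹. In other words, every valid ECDSA signature equals the output of the deterministic ECDSA signing algorithm run with the signing nonce r' recovered from the signature. -/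
/-- Every valid ECDSA signature on `h` under `X = g ^ x` is exactly the output of
the deterministic ECDSA signing algorithm run with the recovered nonce
`r' := (h + c·x)·s⁻¹`. -/
theorem stmt2 (q : ℕ) [Fact q.Prime] (G : Type) [Group G] [Fintype G]
    (hcard : Fintype.card G = q) (g : G) (hgen : ∀ u : G, u ∈ Subgroup.zpowers g)
    (f : G → ZMod q) (x h : ZMod q) (X : G) (hX : X = g ^ x.val)
    (c s : ZMod q) (hvalid : ECDSAValid g f X h c s) :
    (h + c * x) * s⁻¹ ≠ 0 ∧
    (g ^ h.val * X ^ c.val) ^ (s⁻¹).val = g ^ (((h + c * x) * s⁻¹).val) ∧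
    c = f (g ^ (((h + c * x) * s⁻¹).val)) ∧
    s = (h + c * x) * ((h + c * x) * s⁻¹)⁻¹ := by
  obtain ⟨hc, hs, hR1, hfR⟩ := hvalid
  have horder : orderOf g = q := by
    rw [← hcard]
    have : Subgroup.zpowers g = ⊤ := by
      ext u; simp [hgen u]
    rw [orderOf_eq_card_of_forall_mem_zpowers hgen, Nat.card_eq_fintype_card]
  have hkey : ∀ n : ℕ, g ^ n = g ^ ((n : ZMod q)).val := by
    intro n
    rw [pow_eq_pow_iff_modEq, horder, ZMod.val_natCast]
    exact (Nat.mod_modEq n q).symm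
  have hR : (g ^ h.val * X ^ c.val) ^ (s⁻¹).val = g ^ (((h + c * x) * s⁻¹).val) := by
    rw [hX, ← pow_mul, ← pow_add, ← pow_mul, hkey]
    congr 1
    push_cast [ZMod.natCast_val, ZMod.cast_id]
    ring
  have hr' : (h + c * x) * s⁻¹ ≠ 0 := by
    intro h0
    apply hR1
    rw [hR, h0]
    simp
  refine ⟨hr', hR, (hR ▸ hfR).symm, ?_⟩
  have hsum : h + c * x ≠ 0 := left_ne_zero_of_mul hr'
  field_simp
end

section
/- Let q be an odd prime, G a cyclic group of order q with generator g, f : G → ZMod q a conversion function satisfying f(Y) = f(Y⁻¹) for all Y ∈ G, x, h ∈ ZMod q, and X = g^x. Fix r ∈ ZMod q with r ≠ 0, let R := g^r, c₀ := f(R), s₀ := (h + c₀·x)·r⁻¹, and assume c₀ ≠ 0 and s₀ ≠ 0. Then for every pair (c, s) ∈ (ZMod q)², (c, s) is a valid ECDSA signature on h under X whose recovered point (g^h · X^c)^(s⁻¹) lies in {R, R⁻¹} if and only if (c, s) = (c₀, s₀) or (c, s) = (c₀, −s₀). In particular, having fixed the recovered point up to inversion, there are exactly two valid ECDSA signatures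 consistent with it. -/
/-- Having fixed the recovered point up to inversion, there are exactly two
valid ECDSA signatures consistent with it: `(c₀, s₀)` and `(c₀, -s₀)`. -/
theorem stmt3 (q : ℕ) [Fact q.Prime] (hq : Odd q) (G : Type) [Group G] [Fintype G]
    (hcard : Fintype.card G = q) (g : G) (hgen : ∀ u : G, u ∈ Subgroup.zpowers g)
    (f : G → ZMod q) (hf : ∀ Y : G, f Y = f Y⁻¹)
    (x h : ZMod q) (X : G) (hX : X = g ^ x.val)
    (r : ZMod q) (hr : r ≠ 0)
    (c₀ s₀ : ZMod q) (hc₀ : c₀ = f (g ^ r.val)) (hs₀ : s₀ = (h + c₀ * x) * r⁻¹)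
    (hc0 : c₀ ≠ 0) (hs0 : s₀ ≠ 0) :
    ∀ c s : ZMod q,
      (ECDSAValid g f X h c s ∧
        (g ^ h.val * X ^ c.val) ^ (s⁻¹).val ∈ ({g ^ r.val, (g ^ r.val)⁻¹} : Set G))
      ↔ ((c, s) = (c₀, s₀) ∨ (c, s) = (c₀, -s₀)) := by
  have hqp : q.Prime := Fact.out
  haveI : NeZero q := ⟨hqp.ne_zero⟩
  have horder : orderOf g = q := by
    rw [orderOf_eq_card_of_forall_mem_zpowers hgen, Nat.card_eq_fintype_card, hcard]
  have hcast : ∀ a : ℕ, g ^ a = g ^ ((a : ZMod q)).val := by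
    intro a
    rw [pow_eq_pow_iff_modEq, horder, ZMod.val_natCast]
    exact (Nat.mod_modEq a q).symm
  have hinj : ∀ a b : ZMod q, g ^ a.val = g ^ b.val ↔ a = b := by
    intro a b
    rw [pow_eq_pow_iff_modEq, horder, ← ZMod.natCast_eq_natCast_iff,
      ZMod.natCast_val, ZMod.natCast_val, ZMod.cast_id, ZMod.cast_id]
  have hmul : ∀ a b : ZMod q, g ^ a.val * g ^ b.val = g ^ ((a + b).val) := by
    intro a b
    rw [← pow_add, hcast (a.val + b.val)]
    congr 2
    push_cast
    rw [ZMod.natCast_val, ZMod.natCast_val, ZMod.cast_id, ZMod.cast_id]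
  have hpow : ∀ a b : ZMod q, (g ^ a.val) ^ b.val = g ^ ((a * b).val) := by
    intro a b
    rw [← pow_mul, hcast (a.val * b.val)]
    congr 2
    push_cast
    rw [ZMod.natCast_val, ZMod.natCast_val, ZMod.cast_id, ZMod.cast_id]
  have hne1 : ∀ a : ZMod q, g ^ a.val = 1 ↔ a = 0 := by
    intro a
    have := hinj a 0
    rwa [ZMod.val_zero, pow_zero] at this
  have hrec : ∀ c s : ZMod q,
      (g ^ h.val * X ^ c.val) ^ (s⁻¹).val = g ^ (((h + x * c) * s⁻¹).val) := by
    intro c s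
    rw [hX, hpow x c, hmul h (x * c), hpow]
  have hRinv : (g ^ r.val)⁻¹ = g ^ ((-r).val) := by
    symm
    rw [eq_inv_iff_mul_eq_one, hmul, neg_add_cancel]
    simp [ZMod.val_zero]
  have hA : h + c₀ * x ≠ 0 := by
    intro hA0
    apply hs0
    rw [hs₀, hA0, zero_mul]
  intro c s
  constructor
  · rintro ⟨⟨hc, hs, hne, hfv⟩, hmem⟩
    rw [hrec c s] at hmem hfv
    rcases hmem with hm | hm
    · have ht : (h + x * c) * s⁻¹ = r := (hinj _ _).mp hm
      have hcc : c = c₀ := by rw [← hfv, hm, hc₀]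
      left
      have hsv : s = s₀ := by
        rw [hs₀, ← hcc]
        field_simp at ht ⊢
        linear_combination -ht
      rw [hcc, hsv]
    · have hm' : g ^ (((h + x * c) * s⁻¹).val) = g ^ ((-r).val) := by
        rw [hm, hRinv]
      have ht : (h + x * c) * s⁻¹ = -r := (hinj _ _).mp hm'
      have hcc : c = c₀ := by rw [← hfv, hm, ← hf, hc₀]
      right
      have hsv : s = -s₀ := by
        rw [hs₀, ← hcc]
        field_simp at ht ⊢
        linear_combination ht
      rw [hcc, hsv]
  · have hAs : h + x * c₀ = s₀ * r := by
      rw [hs₀]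
      field_simp
    have ht1 : (h + x * c₀) * s₀⁻¹ = r := by
      rw [hAs, mul_comm s₀ r, mul_assoc, mul_inv_cancel₀ hs0, mul_one]
    have ht2 : (h + x * c₀) * (-s₀)⁻¹ = -r := by
      rw [hAs, inv_neg, mul_neg, mul_comm s₀ r, mul_assoc, mul_inv_cancel₀ hs0,
        mul_one]
    have hsn : (-s₀ : ZMod q) ≠ 0 := neg_ne_zero.mpr hs0
    rintro (hcs | hcs) <;> simp only [Prod.mk.injEq] at hcs <;>
        obtain ⟨rfl, rfl⟩ := hcs
    · refine ⟨⟨hc0, hs0, ?_, ?_⟩, ?_⟩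
      · rw [hrec, ht1, Ne, hne1]; exact hr
      · rw [hrec, ht1, hc₀]
      · rw [hrec, ht1]; left; rfl
    · refine ⟨⟨hc0, hsn, ?_, ?_⟩, ?_⟩
      · rw [hrec, ht2, Ne, hne1]; exact neg_ne_zero.mpr hr
      · rw [hrec, ht2, ← hRinv, ← hf, hc₀]
      · rw [hrec, ht2, ← hRinv]; right; rfl
end

section
/- Let p be a prime with p ≡ 3 (mod 4), let n be a natural number, ℓ < n, and let z : Fin n → ZMod p be a sequence of nonzero elements. Suppose that for every i < ℓ there exists rᵢ ∈ ZMod p with rᵢ² = −(z i), and that there exists r ∈ ZMod p with r² = z ℓ. Then z ℓ is a square in ZMod p and z i is not a square for every i < ℓ; that is, z ℓ is the first quadratic residue in the sequence. (This certifies the correctness of the browser-assisted hash-to-point outsourcing: the token checks the browser's claimed square roots and is assured that z ℓ is the first quadratic residue.) -/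
/-- Certifying the first quadratic residue in a sequence: if for each `i < ℓ`
the browser exhibits a square root of `-(z i)`, and a square root of `z ℓ`,
then `z ℓ` is a square and every earlier `z i` is a non-square. -/
theorem stmt5 (p : ℕ) [Fact p.Prime] (hp : p % 4 = 3) (n : ℕ)
    (z : Fin n → ZMod p) (hz : ∀ i, z i ≠ 0) (ℓ : Fin n)
    (h1 : ∀ i : Fin n, i < ℓ → ∃ r : ZMod p, r ^ 2 = -(z i))
    (h2 : ∃ r : ZMod p, r ^ 2 = z ℓ) :
    IsSquare (z ℓ) ∧ ∀ i : Fin n, i < ℓ → ¬ IsSquare (z i) := by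
  constructor
  · obtain ⟨r, hr⟩ := h2
    exact ⟨r, by rw [← hr]; ring⟩
  · intro i hi hsq
    obtain ⟨r, hr⟩ := h1 i hi
    obtain ⟨s, hs⟩ := hsq
    have hneg1 : IsSquare (-1 : ZMod p) := by
      have hs' : s ≠ 0 := by
        intro h; apply hz i; rw [hs, h, mul_zero]
      refine ⟨r * s⁻¹, ?_⟩
      have : (r * s⁻¹) * (r * s⁻¹) = r ^ 2 * (s * s)⁻¹ := by
        field_simp
      rw [this, hr, ← hs, neg_mul, mul_inv_cancel₀ (hz i)]
    rw [ZMod.exists_sq_eq_neg_one_iff] at hneg1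
    exact hneg1 hp
end

section
/- Let q be a prime, G a cyclic group of order q with generator g, f : G → ZMod q, x ∈ ZMod q, and X = g^x. Let h₀, h₁, id₀, c₀, s₀ ∈ ZMod q with h₀ ≠ 0, h₁ ≠ 0, and s₀ ≠ 0, and set id₁ := id₀·h₁·h₀⁻¹ and s₁ := s₀·h₁·h₀⁻¹. If (c₀, s₀) is a valid ECDSA signature on h₀ under the public key X^{id₀}, then (c₀, s₁) is a valid ECDSA signature on h₁ under the public key X^{id₁}; in particular the two verifications recover the same point: (g^{h₁} · (X^{id₁})^{c₀})^(s₁⁻¹) = (g^{h₀} · (X^{id₀})^{c₀})^(s₀⁻¹). (This proves the forgery attack showing that the multiplicative key-derivation variant without a VRF, where the key for identity id is x·id, is insecure.) -/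
lemma stmt8_order {q : ℕ} (hq : q.Prime) {G : Type} [Group G] [Fintype G]
    (hcard : Fintype.card G = q) (g : G) (hgen : ∀ u : G, u ∈ Subgroup.zpowers g) :
    orderOf g = q := by
  have hd : orderOf g ∣ q := hcard ▸ orderOf_dvd_card
  have h2 := hq.two_le
  rcases (Nat.Prime.eq_one_or_self_of_dvd hq _ hd) with h1 | h1
  · exfalso
    have hg1 : g = 1 := orderOf_eq_one_iff.mp h1
    have : Fintype.card G ≤ 1 := by
      have := Fintype.card_le_of_surjective (fun _ : Unit => (1 : G)) (by
        intro u
        rcases hgen u with ⟨n, rfl⟩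
        exact ⟨(), by simp [hg1]⟩)
      simpa using this
    omega
  · exact h1

lemma stmt8_pow_val_mul {q : ℕ} [NeZero q] {G : Type} [Group G] (g : G)
    (hq : orderOf g = q) (a b : ZMod q) :
    (g ^ a.val) ^ b.val = g ^ (a * b).val := by
  rw [← pow_mul]
  apply (pow_eq_pow_iff_modEq).mpr
  rw [hq]
  show a.val * b.val % q = (a * b).val % q
  rw [ZMod.val_mul]
  exact (Nat.mod_mod_of_dvd _ dvd_rfl).symm

lemma stmt8_pow_val_add {q : ℕ} [NeZero q] {G : Type} [Group G] (g : G)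
    (hq : orderOf g = q) (a b : ZMod q) :
    g ^ a.val * g ^ b.val = g ^ (a + b).val := by
  rw [← pow_add]
  apply (pow_eq_pow_iff_modEq).mpr
  rw [hq]
  show (a.val + b.val) % q = (a + b).val % q
  rw [ZMod.val_add]
  exact (Nat.mod_mod_of_dvd _ dvd_rfl).symm

/-- Forgery attack on the multiplicative key-derivation variant (secret key
`x·id`, public key `X^id`): from a valid signature `(c₀, s₀)` on `h₀` under
`X^{id₀}`, the pair `(c₀, s₁)` with `s₁ = s₀·h₁·h₀⁻¹` is a valid signature on
`h₁` under `X^{id₁}` where `id₁ = id₀·h₁·h₀⁻¹`, and both verifications recover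
the same point. -/
theorem stmt8 (q : ℕ) [Fact q.Prime] (G : Type) [Group G] [Fintype G]
    (hcard : Fintype.card G = q) (g : G) (hgen : ∀ u : G, u ∈ Subgroup.zpowers g)
    (f : G → ZMod q) (x : ZMod q) (X : G) (hX : X = g ^ x.val)
    (h₀ h₁ id₀ c₀ s₀ : ZMod q) (hh₀ : h₀ ≠ 0) (hh₁ : h₁ ≠ 0) (hs₀ : s₀ ≠ 0)
    (id₁ s₁ : ZMod q) (hid₁ : id₁ = id₀ * h₁ * h₀⁻¹) (hs₁ : s₁ = s₀ * h₁ * h₀⁻¹)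
    (hvalid : ECDSAValid g f (X ^ id₀.val) h₀ c₀ s₀) :
    ECDSAValid g f (X ^ id₁.val) h₁ c₀ s₁ ∧
      (g ^ h₁.val * (X ^ id₁.val) ^ c₀.val) ^ (s₁⁻¹).val
        = (g ^ h₀.val * (X ^ id₀.val) ^ c₀.val) ^ (s₀⁻¹).val := by
  have hq : orderOf g = q := stmt8_order (Fact.out) hcard g hgen
  haveI : NeZero q := ⟨(Fact.out : q.Prime).ne_zero⟩
  have key : ∀ h id s : ZMod q,
      (g ^ h.val * (X ^ id.val) ^ c₀.val) ^ (s⁻¹).val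
        = g ^ (((h + x * id * c₀) * s⁻¹).val) := by
    intro h id s
    rw [hX, stmt8_pow_val_mul g hq, stmt8_pow_val_mul g hq, stmt8_pow_val_add g hq,
      stmt8_pow_val_mul g hq, mul_assoc]
  have he : (h₁ + x * id₁ * c₀) * s₁⁻¹ = (h₀ + x * id₀ * c₀) * s₀⁻¹ := by
    rw [hid₁, hs₁, mul_inv, mul_inv]
    field_simp
  have hpt : (g ^ h₁.val * (X ^ id₁.val) ^ c₀.val) ^ (s₁⁻¹).val
      = (g ^ h₀.val * (X ^ id₀.val) ^ c₀.val) ^ (s₀⁻¹).val := by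
    rw [key, key, he]
  obtain ⟨hc₀, _, hne, hf⟩ := hvalid
  refine ⟨⟨hc₀, ?_, ?_, ?_⟩, hpt⟩
  · rw [hs₁]
    exact mul_ne_zero (mul_ne_zero hs₀ hh₁) (inv_ne_zero hh₀)
  · rw [hpt]; exact hne
  · rw [hpt]; exact hf
end

section
/- Let q be a prime, G a cyclic group of order q with generator g, f : G → ZMod q, x ∈ ZMod q, and X = g^x. Let h₀, h₁, id₀, c₀, s₀ ∈ ZMod q with c₀ ≠ 0 and s₀ ≠ 0, and set id₁ := id₀ + (h₀ − h₁)·c₀⁻¹. If (c₀, s₀) is a valid ECDSA signature on h₀ under the public key X·g^{id₀}, then (c₀, s₀) is a valid ECDSA signature on h₁ under the public key X·g^{id₁}; in particular (g^{h₁} · (X·g^{id₁})^{c₀})^(s₀⁻¹) = (g^{h₀} · (X·g^{id₀})^{c₀})^(s₀⁻¹). (This proves the forgery attack showing that the additive key-derivation variant without a VRF, where the key for identity id is x + id, is insecure.) -/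
/-- Forgery attack on the additive key-derivation variant (secret key `x + id`,
public key `X·g^id`): from a valid signature `(c₀, s₀)` on `h₀` under
`X·g^{id₀}`, the same pair `(c₀, s₀)` is a valid signature on `h₁` under
`X·g^{id₁}` where `id₁ = id₀ + (h₀ − h₁)·c₀⁻¹`, and both verifications recover
the same point. -/
theorem stmt9 (q : ℕ) [Fact q.Prime] (G : Type) [Group G] [Fintype G]
    (hcard : Fintype.card G = q) (g : G) (hgen : ∀ u : G, u ∈ Subgroup.zpowers g)
    (f : G → ZMod q) (x : ZMod q) (X : G) (hX : X = g ^ x.val)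
    (h₀ h₁ id₀ c₀ s₀ : ZMod q) (hc₀ : c₀ ≠ 0) (hs₀ : s₀ ≠ 0)
    (id₁ : ZMod q) (hid₁ : id₁ = id₀ + (h₀ - h₁) * c₀⁻¹)
    (hvalid : ECDSAValid g f (X * g ^ id₀.val) h₀ c₀ s₀) :
    ECDSAValid g f (X * g ^ id₁.val) h₁ c₀ s₀ ∧
      (g ^ h₁.val * (X * g ^ id₁.val) ^ c₀.val) ^ (s₀⁻¹).val
        = (g ^ h₀.val * (X * g ^ id₀.val) ^ c₀.val) ^ (s₀⁻¹).val := by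

  have hq : q = Fintype.card G := hcard.symm
  haveI : NeZero q := ⟨(Fact.out : q.Prime).ne_zero⟩
  have hord : orderOf g = q := by
    rw [orderOf_eq_card_of_forall_mem_zpowers hgen, Nat.card_eq_fintype_card, hcard]
  have hp : ∀ n : ℕ, g ^ (n % q) = g ^ n := by
    intro n; conv_rhs => rw [← pow_mod_orderOf]
    rw [hord]
  have hadd : ∀ a b : ZMod q, g ^ (a + b).val = g ^ a.val * g ^ b.val := by
    intro a b; rw [ZMod.val_add, hp, pow_add]
  have hmul : ∀ a b : ZMod q, g ^ (a * b).val = (g ^ a.val) ^ b.val := by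
    intro a b; rw [ZMod.val_mul, hp, pow_mul]
  have key : g ^ h₁.val * (X * g ^ id₁.val) ^ c₀.val
      = g ^ h₀.val * (X * g ^ id₀.val) ^ c₀.val := by
    have e : ∀ h id : ZMod q, g ^ h.val * (X * g ^ id.val) ^ c₀.val
        = g ^ (h + (x + id) * c₀).val := by
      intro h id
      rw [hX, hadd, hmul, hadd]
    rw [e, e]
    congr 1
    have : h₁ + (x + id₁) * c₀ = h₀ + (x + id₀) * c₀ := by
      rw [hid₁]; field_simp; ring
    rw [this]
  obtain ⟨-, -, hne, hf⟩ := hvalid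
  refine ⟨⟨hc₀, hs₀, ?_, ?_⟩, ?_⟩
  · rw [key]; exact hne
  · rw [key]; exact hf
  · rw [key]
end

section
/- Let q be an odd prime, G a cyclic group of order q with generator g, and f : G → ZMod q a conversion function satisfying f(Y) = f(Y⁻¹) for all Y ∈ G. Fix x, h ∈ ZMod q and define Sgn : {r : ZMod q // r ≠ 0} → (ZMod q)² by Sgn(r) = (f(g^r), (h + f(g^r)·x)·r⁻¹). Then the pushforward of the uniform distribution on the nonzero elements of ZMod q under Sgn equals the pushforward of the uniform distribution on (nonzero elements of ZMod q) × Bool under the map (r, b) ↦ (c, if b then s else −s) where (c, s) = Sgn(r). (This is the distributional identity underlying exfiltration resistance: outputting a uniformly random element of {σ, σ̄} given the recovered point matches the distribution of honestly generated ECDSA signatures.) -/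
/-- The distributional identity underlying exfiltration resistance: the ECDSA
signing map `Sgn`, applied to a uniformly random nonzero nonce, produces the
same distribution as first producing a signature and then outputting, with a
uniformly random and independent bit, either the signature `(c, s)` or its
mauled version `(c, -s)`. -/
theorem stmt13 (q : ℕ) [Fact q.Prime] [NeZero q] (hq : Odd q)
    (G : Type) [Group G] [Fintype G] (hcard : Fintype.card G = q)
    (g : G) (hgen : ∀ u : G, u ∈ Subgroup.zpowers g)
    (f : G → ZMod q) (hf : ∀ Y : G, f Y = f Y⁻¹) (x h : ZMod q)
    [Nonempty {r : ZMod q // r ≠ 0}]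
    (Sgn : {r : ZMod q // r ≠ 0} → ZMod q × ZMod q)
    (hSgn : ∀ r : {r : ZMod q // r ≠ 0},
      Sgn r = (f (g ^ (r : ZMod q).val),
               (h + f (g ^ (r : ZMod q).val) * x) * (r : ZMod q)⁻¹)) :
    PMF.map Sgn (PMF.uniformOfFintype {r : ZMod q // r ≠ 0}) =
      PMF.map
        (fun p : {r : ZMod q // r ≠ 0} × Bool =>
          ((Sgn p.1).1, if p.2 then (Sgn p.1).2 else -(Sgn p.1).2))
        (PMF.uniformOfFintype ({r : ZMod q // r ≠ 0} × Bool)) := by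
  classical
  -- the nonce-negation involution
  set neg : {r : ZMod q // r ≠ 0} → {r : ZMod q // r ≠ 0} :=
    fun r => ⟨-r.1, neg_ne_zero.mpr r.2⟩ with hneg
  have hinv : Function.Involutive neg := by
    intro r; simp [hneg]
  -- the group-theoretic key: g ^ (-r).val = (g ^ r.val)⁻¹
  have hpow : ∀ r : {r : ZMod q // r ≠ 0},
      g ^ ((-(r : ZMod q)).val) = (g ^ (r : ZMod q).val)⁻¹ := by
    intro r
    have hgq : g ^ q = 1 := by rw [← hcard]; exact pow_card_eq_one
    have hval : (-(r : ZMod q)).val = q - (r : ZMod q).val := by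
      rw [ZMod.neg_val]; simp [r.2]
    have hle : (r : ZMod q).val ≤ q := le_of_lt (ZMod.val_lt _)
    rw [hval, eq_inv_iff_mul_eq_one, ← pow_add, Nat.sub_add_cancel hle, hgq]
  -- key: Sgn (neg r) = ((Sgn r).1, -(Sgn r).2)
  have hkey : ∀ r, Sgn (neg r) = ((Sgn r).1, -(Sgn r).2) := by
    intro r
    rw [hSgn, hSgn]
    have h1 : f (g ^ ((neg r : ZMod q)).val) = f (g ^ (r : ZMod q).val) := by
      show f (g ^ ((-(r : ZMod q)).val)) = _
      rw [hpow, ← hf]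
    simp only [h1]
    congr 1
    show (h + f (g ^ (r : ZMod q).val) * x) * (-(r : ZMod q))⁻¹ = _
    rw [inv_neg, mul_neg]
  ext σ
  simp only [PMF.map_apply, PMF.uniformOfFintype_apply, tsum_fintype]
  rw [Fintype.sum_prod_type]
  have hcard2 : (Fintype.card ({r : ZMod q // r ≠ 0} × Bool) : ENNReal)⁻¹
      = (2 : ENNReal)⁻¹ * (Fintype.card {r : ZMod q // r ≠ 0} : ENNReal)⁻¹ := by
    rw [Fintype.card_prod, Fintype.card_bool]
    push_cast
    rw [mul_comm, ENNReal.mul_inv (by simp) (by simp)]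
  simp only [hcard2, Fintype.sum_bool, if_true, if_false]
  have hsplit : ∀ (c : ENNReal) (r : {r : ZMod q // r ≠ 0}),
      ((if σ = ((Sgn r).1, (Sgn r).2) then c else 0)
        + (if σ = ((Sgn r).1, -(Sgn r).2) then c else 0))
      = (if σ = Sgn r then c else 0) + (if σ = Sgn (neg r) then c else 0) := by
    intro c r
    rw [hkey]
  calc ∑ r : {r : ZMod q // r ≠ 0},
        (if σ = Sgn r then (Fintype.card {r : ZMod q // r ≠ 0} : ENNReal)⁻¹ else 0)
      = ∑ r : {r : ZMod q // r ≠ 0},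
        ((if σ = Sgn r then (2:ENNReal)⁻¹ * (Fintype.card {r : ZMod q // r ≠ 0} : ENNReal)⁻¹ else 0)
          + (if σ = Sgn r then (2:ENNReal)⁻¹ * (Fintype.card {r : ZMod q // r ≠ 0} : ENNReal)⁻¹ else 0)) := by
        apply Finset.sum_congr rfl
        intro r _
        split <;> simp [ENNReal.inv_two_add_inv_two]
        · rw [← add_mul, ENNReal.inv_two_add_inv_two, one_mul]
    _ = ∑ r : {r : ZMod q // r ≠ 0},
        ((if σ = Sgn r then (2:ENNReal)⁻¹ * (Fintype.card {r : ZMod q // r ≠ 0} : ENNReal)⁻¹ else 0)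
          + (if σ = Sgn (neg r) then (2:ENNReal)⁻¹ * (Fintype.card {r : ZMod q // r ≠ 0} : ENNReal)⁻¹ else 0)) := by
        rw [Finset.sum_add_distrib, Finset.sum_add_distrib]
        congr 1
        exact (Fintype.sum_equiv hinv.toPerm _ _ (fun r => rfl)).symm
    _ = _ := by
        apply Finset.sum_congr rfl
        intro r _
        simp only [Bool.false_eq_true, if_false]
        exact (hsplit _ r).symm
end
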